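/- Let K be a field and let A be a monomial algebra over K that is amenable as a right module over itself. Then for every finite-dimensional subspace V ≤ A and every ε > 0 there exists a (V,ε)-invariant finite-dimensional subspace of A spanned by monomials. Furthermore, if A is exhaustively amenable as a right module over itself, then A has a Følner sequence consisting of subspaces spanned by monomials. -/

import Mathlib

noncomputable section

namespace Paper

open Module Filter MulOpposite

/-- The free associative unital `K`-algebra on a set `σ` of generators,
realized as the monoid algebra of the free monoid on `σ`. -/
abbrev FreeAlg (K : Type) [Field K] (σ : Type) : Type := MonoidAlgebra K (FreeMonoid σ)

/-- The monomial of the free algebra corresponding to a word `w`. -/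
def wrd (K : Type) [Field K] {σ : Type} (w : List σ) : FreeAlg K σ :=
  MonoidAlgebra.of K (FreeMonoid σ) (FreeMonoid.ofList w)

variable (K : Type) [Field K]

section Defs

variable {σ : Type} {A : Type} [Ring A] [Algebra K A]

/-- `a` is a monomial of `A` (i.e. the image of a word under the presentation `π`). -/
def IsMono (π : FreeAlg K σ →ₐ[K] A) (a : A) : Prop :=
  ∃ w : List σ, a = π (wrd K w)

/-- `a` is a monomial of `A` of length `D`. -/
def IsMonoLen (π : FreeAlg K σ →ₐ[K] A) (D : ℕ) (a : A) : Prop :=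
  ∃ w : List σ, w.length = D ∧ a = π (wrd K w)

/-- `π` presents `A` as a monomial algebra: `π` is onto and its kernel is spanned by the
monomials it contains (equivalently, it is generated as a two-sided ideal by monomials). -/
def MonomialPresentation (π : FreeAlg K σ →ₐ[K] A) : Prop :=
  Function.Surjective π ∧
    ∀ a : FreeAlg K σ, π a = 0 ↔
      a ∈ Submodule.span K {m : FreeAlg K σ | ∃ w : List σ, m = wrd K w ∧ π (wrd K w) = 0}

/-- Every nonzero monomial of `A` is right prolongable. -/
def RightProlongable (π : FreeAlg K σ →ₐ[K] A) : Prop :=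
  ∀ a : A, IsMono K π a → a ≠ 0 → ∃ w : List σ, w ≠ [] ∧ a * π (wrd K w) ≠ 0

/-- A subspace of `A` spanned by monomials. -/
def MonomialSubspace (π : FreeAlg K σ →ₐ[K] A) (L : Submodule K A) : Prop :=
  ∃ S : Set (List σ), L = Submodule.span K ((fun w => π (wrd K w)) '' S)

/-- The standard generating subspace, spanned by `1` together with the generators. -/
def genV (π : FreeAlg K σ →ₐ[K] A) : Submodule K A :=
  Submodule.span K ({1} ∪ Set.range fun i : σ => π (wrd K [i]))

end Defs

section Amen

/-- `L` is a `(V, ε)`-invariant subspace of `A`, viewed as a right module over itself: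
`dim (L·V) < (1+ε) · dim L`. -/
def RInv {A : Type} [Ring A] [Algebra K A] (L V : Submodule K A) (ε : ℝ) : Prop :=
  FiniteDimensional K L ∧ FiniteDimensional K (L * V : Submodule K A) ∧
    (finrank K (L * V : Submodule K A) : ℝ) < (1 + ε) * (finrank K L : ℝ)

/-- `L` is a `(V, ε)`-invariant subspace of `A`, viewed as a left module over itself. -/
def LInv {A : Type} [Ring A] [Algebra K A] (L V : Submodule K A) (ε : ℝ) : Prop :=
  FiniteDimensional K L ∧ FiniteDimensional K (V * L : Submodule K A) ∧
    (finrank K (V * L : Submodule K A) : ℝ) < (1 + ε) * (finrank K L : ℝ)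

/-- `A` is amenable as a right module over itself. -/
def RightSelfAmenable (A : Type) [Ring A] [Algebra K A] : Prop :=
  ∀ V : Submodule K A, FiniteDimensional K V → ∀ ε : ℝ, 0 < ε →
    ∃ L : Submodule K A, RInv K L V ε

/-- `A` is exhaustively amenable as a right module over itself. -/
def RightSelfExhAmenable (A : Type) [Ring A] [Algebra K A] : Prop :=
  ∀ V : Submodule K A, FiniteDimensional K V → ∀ ε : ℝ, 0 < ε →
    ∀ W : Submodule K A, FiniteDimensional K W →
      ∃ L : Submodule K A, W ≤ L ∧ RInv K L V ε

/-- `A` is exhaustively amenable as a left module over itself. -/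
def LeftSelfExhAmenable (A : Type) [Ring A] [Algebra K A] : Prop :=
  ∀ V : Submodule K A, FiniteDimensional K V → ∀ ε : ℝ, 0 < ε →
    ∀ W : Submodule K A, FiniteDimensional K W →
      ∃ L : Submodule K A, W ≤ L ∧ LInv K L V ε

/-- For a right `A`-module `M` (encoded via an `Aᵐᵒᵖ`-action), the subspace `L·V`,
spanned by `{ℓ·v : ℓ ∈ L, v ∈ V}`. -/
def rLV {A M : Type} [Ring A] [Algebra K A] [AddCommGroup M] [Module K M] [Module Aᵐᵒᵖ M]
    (L : Submodule K M) (V : Submodule K A) : Submodule K M :=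
  Submodule.span K {x : M | ∃ l ∈ L, ∃ v ∈ V, x = (op v) • l}

/-- `L` is a `(V, ε)`-invariant subspace of the right `A`-module `M`. -/
def RModInv {A M : Type} [Ring A] [Algebra K A] [AddCommGroup M] [Module K M] [Module Aᵐᵒᵖ M]
    (L : Submodule K M) (V : Submodule K A) (ε : ℝ) : Prop :=
  FiniteDimensional K L ∧ FiniteDimensional K (rLV K L V) ∧
    (finrank K (rLV K L V) : ℝ) < (1 + ε) * (finrank K L : ℝ)

/-- The right `A`-module `M` is amenable. -/
def RModAmenable (A M : Type) [Ring A] [Algebra K A] [AddCommGroup M] [Module K M]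
    [Module Aᵐᵒᵖ M] [IsScalarTower K Aᵐᵒᵖ M] : Prop :=
  ∀ V : Submodule K A, FiniteDimensional K V → ∀ ε : ℝ, 0 < ε →
    ∃ L : Submodule K M, RModInv K L V ε

/-- The right `A`-module `M` is exhaustively amenable. -/
def RModExhAmenable (A M : Type) [Ring A] [Algebra K A] [AddCommGroup M] [Module K M]
    [Module Aᵐᵒᵖ M] [IsScalarTower K Aᵐᵒᵖ M] : Prop :=
  ∀ V : Submodule K A, FiniteDimensional K V → ∀ ε : ℝ, 0 < ε →
    ∀ W : Submodule K M, FiniteDimensional K W →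
      ∃ L : Submodule K M, W ≤ L ∧ RModInv K L V ε

/-- For a left `A`-module `M`, the subspace `V·L`, spanned by `{v·ℓ : ℓ ∈ L, v ∈ V}`. -/
def lVL {A M : Type} [Ring A] [Algebra K A] [AddCommGroup M] [Module K M] [Module A M]
    (L : Submodule K M) (V : Submodule K A) : Submodule K M :=
  Submodule.span K {x : M | ∃ l ∈ L, ∃ v ∈ V, x = v • l}

/-- `L` is a `(V, ε)`-invariant subspace of the left `A`-module `M`. -/
def LModInv {A M : Type} [Ring A] [Algebra K A] [AddCommGroup M] [Module K M] [Module A M]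
    (L : Submodule K M) (V : Submodule K A) (ε : ℝ) : Prop :=
  FiniteDimensional K L ∧ FiniteDimensional K (lVL K L V) ∧
    (finrank K (lVL K L V) : ℝ) < (1 + ε) * (finrank K L : ℝ)

/-- The left `A`-module `M` is exhaustively amenable. -/
def LModExhAmenable (A M : Type) [Ring A] [Algebra K A] [AddCommGroup M] [Module K M]
    [Module A M] [IsScalarTower K A M] : Prop :=
  ∀ V : Submodule K A, FiniteDimensional K V → ∀ ε : ℝ, 0 < ε →
    ∀ W : Submodule K M, FiniteDimensional K W →
      ∃ L : Submodule K M, W ≤ L ∧ LModInv K L V ε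

/-- A Følner sequence for `A` as a right module over itself, with respect to the
generating subspace `V`. -/
def FolnerSeq {A : Type} [Ring A] [Algebra K A] (V : Submodule K A)
    (L : ℕ → Submodule K A) : Prop :=
  Monotone L ∧ (∀ n, FiniteDimensional K (L n)) ∧ (⨆ n, L n) = (⊤ : Submodule K A) ∧
    Tendsto (fun n => (finrank K (L n * V : Submodule K A) : ℝ) / (finrank K (L n) : ℝ))
      atTop (nhds 1)

/-- The isoperimetric profile of `A` with respect to `V`:
`I(n) = inf {dim((W·V + W)/W) : dim W = n}`. -/
def isoProfile {A : Type} [Ring A] [Algebra K A] (V : Submodule K A) (n : ℕ) : ℕ :=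
  sInf {k : ℕ | ∃ W : Submodule K A, FiniteDimensional K W ∧ finrank K W = n ∧
    FiniteDimensional K (W ⊔ W * V : Submodule K A) ∧
    k = finrank K (W ⊔ W * V : Submodule K A) - finrank K W}

end Amen

section Words

variable {σ : Type}

/-- The shift on bi-infinite words. -/
def shiftZ (s : ℤ → σ) : ℤ → σ := fun n => s (n + 1)

/-- The word `u` occurs in the bi-infinite word `s` at position `k`. -/
def OccursAt (u : List σ) (s : ℤ → σ) (k : ℤ) : Prop :=
  ∀ i : Fin u.length, s (k + (i : ℕ)) = u.get i

/-- `u` is a (finite) factor of the bi-infinite word `s`. -/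
def FactorZ (u : List σ) (s : ℤ → σ) : Prop := ∃ k : ℤ, OccursAt u s k

/-- `u` is a factor of the subshift `X`. -/
def FactorOfX (u : List σ) (X : Set (ℤ → σ)) : Prop := ∃ s ∈ X, FactorZ u s

/-- `s` is recurrent: every factor occurs at infinitely many positions. -/
def RecurrentZ (s : ℤ → σ) : Prop :=
  ∀ u : List σ, FactorZ u s → {k : ℤ | OccursAt u s k}.Infinite

/-- `s` is uniformly recurrent: for every factor `u` there is `N` such that every
factor of `s` of length `N` contains an occurrence of `u`. -/
def UnifRecurrentZ (s : ℤ → σ) : Prop :=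
  ∀ u : List σ, FactorZ u s → ∃ N : ℕ, ∀ v : List σ, FactorZ v s → v.length = N → u <:+: v

/-- `X ⊆ σ^ℤ` is a subshift: nonempty, closed and shift-invariant. -/
def IsSubshift [TopologicalSpace σ] (X : Set (ℤ → σ)) : Prop :=
  X.Nonempty ∧ IsClosed X ∧ ∀ s ∈ X, shiftZ s ∈ X

/-- `X` is a minimal subshift. -/
def IsMinimalSubshift [TopologicalSpace σ] (X : Set (ℤ → σ)) : Prop :=
  IsSubshift X ∧
    ∀ Y : Set (ℤ → σ), Y ⊆ X → IsClosed Y → (∀ s ∈ Y, shiftZ s ∈ Y) → Y = ∅ ∨ Y = X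

/-- `X` is a transitive subshift: some element has dense shift-orbit. -/
def IsTransitiveSubshift [TopologicalSpace σ] (X : Set (ℤ → σ)) : Prop :=
  IsSubshift X ∧ ∃ s ∈ X, closure {t : ℤ → σ | ∃ n : ℤ, t = fun m => s (m + n)} = X

/-- The word `u` occurs in the right-infinite word `s` at position `k`. -/
def OccursAtN (u : List σ) (s : ℕ → σ) (k : ℕ) : Prop :=
  ∀ i : Fin u.length, s (k + (i : ℕ)) = u.get i

/-- `u` is a factor of the right-infinite word `s`. -/
def FactorN (u : List σ) (s : ℕ → σ) : Prop := ∃ k : ℕ, OccursAtN u s k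

/-- A right-infinite word is uniformly recurrent. -/
def UnifRecurrentN (s : ℕ → σ) : Prop :=
  ∀ u : List σ, FactorN u s → ∃ N : ℕ, ∀ v : List σ, FactorN v s → v.length = N → u <:+: v

end Words

end Paper

/-!
Use the basis of `A` formed by its nonzero monomials and order the words so that the order is
compatible with right multiplication. For a finite-dimensional `L ≤ A`, the leading monomials of
the elements of `L` span a monomial subspace `L̃` with `dim L̃ = dim L` (Gaussian elimination).
If `V'` is spanned by monomials and `w` is a monomial, then the leading monomial of `f·w` is
`lead(f)·w` whenever that is nonzero, so `L̃·V' ⊆ (L·V')~` and `dim L̃V' ≤ dim LV'`. Hence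
`L ↦ L̃` preserves `(V', ε)`-invariance, and every finite-dimensional `V` lies in such a `V'`.
Since `L̃` contains every monomial in `L`, exhaustive amenability yields monomial invariant
subspaces containing any given finite-dimensional subspace, and a diagonal choice with
`ε = 1/(n+1)` gives the Følner sequence.
-/

namespace Paper

open Module Submodule Filter

section LeadingIndex

variable {K M ι κ : Type*} [DivisionRing K] [AddCommGroup M] [Module K M] [LinearOrder κ]
  (b : Basis ι K M) (key : ι → κ)

def IsLeadingIndex (f : M) (i : ι) : Prop :=
  i ∈ (b.repr f).support ∧ ∀ j ∈ (b.repr f).support, key j ≤ key i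

def leadingIndices (L : Submodule K M) : Set ι :=
  {i | ∃ f ∈ L, IsLeadingIndex b key f i}

def leadingSpan (L : Submodule K M) : Submodule K M :=
  span K (b '' leadingIndices b key L)

variable {b key}

theorem exists_isLeadingIndex {f : M} (hf : f ≠ 0) : ∃ i, IsLeadingIndex b key f i :=
  (b.repr f).support.exists_max_image key (by simpa using hf)

theorem isLeadingIndex_basis (i : ι) : IsLeadingIndex b key (b i) i := by
  simp [IsLeadingIndex]

theorem isLeadingIndex_iff (hkey : Function.Injective key) {f : M} {i : ι} :
    IsLeadingIndex b key f i ↔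
      ∃ c ≠ (0 : K), f - c • b i ∈ span K (b '' {j | key j < key i}) := by
  simp only [b.mem_span_image, map_sub, map_smul, b.repr_self, Set.subset_def, Finset.mem_coe,
    Finsupp.mem_support_iff, Finsupp.sub_apply, Finsupp.smul_apply, Set.mem_ofPred_eq]
  constructor
  · rintro ⟨hi, hmax⟩
    refine ⟨b.repr f i, Finsupp.mem_support_iff.mp hi, fun j hj => ?_⟩
    by_cases hji : i = j
    · subst hji; simp at hj
    · rw [Finsupp.single_eq_of_ne (Ne.symm hji), smul_zero, sub_zero] at hj
      exact (hmax j (Finsupp.mem_support_iff.mpr hj)).lt_of_ne fun h => hji (hkey h).symm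
  · rintro ⟨c, hc, hlow⟩
    have hfi : b.repr f i = c := by
      by_contra h
      exact lt_irrefl _ (hlow i (by simpa [sub_eq_zero] using h))
    refine ⟨Finsupp.mem_support_iff.mpr (hfi ▸ hc), fun j hj => ?_⟩
    by_cases hji : i = j
    · rw [hji]
    · refine (hlow j ?_).le
      rwa [Finsupp.single_eq_of_ne (Ne.symm hji), smul_zero, sub_zero, ← Finsupp.mem_support_iff]

theorem linearIndependent_of_isLeadingIndex (hkey : Function.Injective key) {s : Set ι}
    {v : s → M} (hv : ∀ i : s, IsLeadingIndex b key (v i) i) : LinearIndependent K v := by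
  classical
  rw [linearIndependent_iff']
  intro t g hsum i hi
  by_contra hgi
  obtain ⟨j, hj, hjmax⟩ := (t.filter (g · ≠ 0)).exists_max_image (fun k : s => key k)
    ⟨i, Finset.mem_filter.mpr ⟨hi, hgi⟩⟩
  rw [Finset.mem_filter] at hj
  have hcoeff : b.repr (∑ k ∈ t, g k • v k) j = g j * b.repr (v j) j := by
    rw [map_sum, Finsupp.finsetSum_apply, Finset.sum_eq_single j]
    · simp
    · intro k hk hkj
      by_cases hgk : g k = 0
      · simp [hgk]
      have hlt : key k < key j := (hjmax k (Finset.mem_filter.mpr ⟨hk, hgk⟩)).lt_of_ne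
        fun h => hkj (Subtype.ext (hkey h))
      have hj_notMem : (j : ι) ∉ (b.repr (v k)).support := fun hm => ((hv k).2 j hm).not_gt hlt
      simp [Finsupp.notMem_support_iff.mp hj_notMem]
    · exact fun hj' => absurd hj.1 hj'
  rw [hsum, map_zero, Finsupp.zero_apply] at hcoeff
  exact mul_ne_zero hj.2 (Finsupp.mem_support_iff.mp (hv j).1) hcoeff.symm

theorem exists_finite_le_span_image (V : Submodule K M) [FiniteDimensional K V] :
    ∃ T : Set ι, T.Finite ∧ V ≤ span K (b '' T) := by
  obtain ⟨s, hs⟩ := fg_iff_finiteDimensional V |>.mpr ‹_›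
  refine ⟨⋃ v ∈ s, ↑(b.repr v).support,
    s.finite_toSet.biUnion fun v _ => Finset.finite_toSet _, ?_⟩
  rw [← hs, span_le]
  intro v hv
  exact span_mono (Set.image_mono (Set.subset_biUnion_of_mem hv)) (b.mem_span_repr_support v)

theorem leadingIndices_subset {L : Submodule K M} {T : Set ι} (hL : L ≤ span K (b '' T)) :
    leadingIndices b key L ⊆ T := by
  rintro i ⟨f, hf, hi⟩
  exact b.mem_span_image.mp (hL hf) hi.1

theorem span_image_le_leadingSpan {L : Submodule K M} {T : Set ι} (hT : span K (b '' T) ≤ L) :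
    span K (b '' T) ≤ leadingSpan b key L :=
  span_mono <| Set.image_mono fun i hi =>
    ⟨b i, hT (subset_span ⟨i, hi, rfl⟩), isLeadingIndex_basis i⟩

theorem leadingIndices_finite (L : Submodule K M) [FiniteDimensional K L] :
    (leadingIndices b key L).Finite :=
  let ⟨_, hT, hLT⟩ := exists_finite_le_span_image (b := b) L
  hT.subset (leadingIndices_subset hLT)

theorem finrank_leadingSpan (hkey : Function.Injective key) (L : Submodule K M)
    [FiniteDimensional K L] : finrank K (leadingSpan b key L) = finrank K L := by
  set s := leadingIndices b key L
  have : Fintype s := (leadingIndices_finite L).fintype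
  have hspan : finrank K (leadingSpan b key L) = Fintype.card s := by
    rw [leadingSpan, Set.image_eq_range]
    exact finrank_span_eq_card (b.linearIndependent.comp _ Subtype.val_injective)
  rw [hspan]
  apply le_antisymm
  · choose v hvL hv using fun i : s => i.2
    exact (LinearIndependent.of_comp L.subtype (v := fun i => ⟨v i, hvL i⟩)
      (linearIndependent_of_isLeadingIndex hkey hv)).fintype_card_le_finrank
  · -- a nonzero `f ∈ L` has a nonzero coordinate at its own leading index
    let φ : L →ₗ[K] s → K := LinearMap.pi fun i => b.coord i ∘ₗ L.subtype
    have hφ : Function.Injective φ := by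
      rw [← LinearMap.ker_eq_bot, LinearMap.ker_eq_bot']
      intro f hf
      by_contra hne
      obtain ⟨i, hi⟩ := exists_isLeadingIndex (b := b) (key := key) (L.coe_eq_zero.not.mpr hne)
      exact Finsupp.mem_support_iff.mp hi.1 (congrFun hf ⟨i, f, f.2, hi⟩)
    simpa using LinearMap.finrank_le_finrank_of_injective hφ

end LeadingIndex

section MonomialBasis

variable {K : Type} [Field K] {σ A : Type} [Ring A] [Algebra K A]

theorem wrd_append (u v : List σ) : wrd K (u ++ v) = wrd K u * wrd K v :=
  (MonoidAlgebra.of K (FreeMonoid σ)).map_mul _ _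

def wordBasis (K : Type) [Field K] (σ : Type) : Basis (List σ) K (FreeAlg K σ) :=
  (MonoidAlgebra.basis (FreeMonoid σ) K).reindex FreeMonoid.toList

theorem wordBasis_apply (w : List σ) : wordBasis K σ w = wrd K w := by
  simp [wordBasis, wrd]

variable (π : FreeAlg K σ →ₐ[K] A)

def nonzeroWords : Set (List σ) := {w | π (wrd K w) ≠ 0}

theorem span_monomials_eq_top (hπ : Function.Surjective π) :
    span K (Set.range fun w => π (wrd K w)) = ⊤ := by
  have hrange :
      Set.range (fun w => π (wrd K w)) = π.toLinearMap '' Set.range (wordBasis K σ) := by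
    rw [← Set.range_comp]
    simp [Function.comp_def, wordBasis_apply]
  rw [hrange, ← map_span, (wordBasis K σ).span_eq, Submodule.map_top,
    LinearMap.range_eq_top.mpr hπ]

theorem linearIndependent_monomials (hπ : MonomialPresentation K π) :
    LinearIndependent K fun w : nonzeroWords π => π (wrd K w) := by
  have hker : LinearMap.ker π.toLinearMap = span K (wordBasis K σ '' (nonzeroWords π)ᶜ) := by
    ext a
    rw [LinearMap.mem_ker, AlgHom.toLinearMap_apply, hπ.2]
    congr! 2
    ext m
    simp [nonzeroWords, wordBasis_apply, eq_comm, and_comm]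
  have hwords := (wordBasis K σ).linearIndependent.comp _
    (Subtype.val_injective (p := (· ∈ nonzeroWords π)))
  have := hwords.map (f := π.toLinearMap) <| by
    rw [hker, Set.range_comp, Subtype.range_coe]
    exact (wordBasis K σ).linearIndependent.disjoint_span_image disjoint_compl_right
  simpa [Function.comp_def, wordBasis_apply] using this

def monomialBasis (hπ : MonomialPresentation K π) : Basis (nonzeroWords π) K A :=
  Basis.mk (linearIndependent_monomials π hπ) <| by
    rw [← span_monomials_eq_top π hπ.1, span_le]
    rintro _ ⟨w, rfl⟩
    by_cases hw : π (wrd K w) = 0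
    · simp only [SetLike.mem_coe, hw, zero_mem]
    · exact subset_span ⟨⟨w, hw⟩, rfl⟩

theorem monomialBasis_apply (hπ : MonomialPresentation K π) (w : nonzeroWords π) :
    monomialBasis π hπ w = π (wrd K w) :=
  Basis.mk_apply _ _ _

theorem monomialBasis_mul (hπ : MonomialPresentation K π) (w : nonzeroWords π) (x : List σ) :
    monomialBasis π hπ w * π (wrd K x) = π (wrd K (w ++ x)) := by
  rw [monomialBasis_apply, wrd_append, map_mul]

theorem monomialSubspace_span_image (hπ : MonomialPresentation K π) (S : Set (nonzeroWords π)) :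
    MonomialSubspace K π (span K (monomialBasis π hπ '' S)) :=
  ⟨Subtype.val '' S, by simp [Set.image_image, monomialBasis_apply]⟩

end MonomialBasis

-- Plain lexicographic order is not compatible with right multiplication; comparing the reversed
-- words is.
theorem List.reverse_append_lt_reverse_append {σ : Type*} [LinearOrder σ] {u v : List σ}
    (h : u.reverse < v.reverse) (x : List σ) : (u ++ x).reverse < (v ++ x).reverse := by
  rw [List.reverse_append, List.reverse_append]
  exact (List.lt_iff_lex_lt _ _).mpr (((List.lt_iff_lex_lt _ _).mp h).append_left _ _)

section LeadingWords

variable {K : Type} [Field K] {σ A : Type} [LinearOrder σ] [Ring A] [Algebra K A]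
  (π : FreeAlg K σ →ₐ[K] A) (hπ : MonomialPresentation K π)

theorem isLeadingIndex_mul_monomial {f : A} {u : nonzeroWords π}
    (hf : IsLeadingIndex (monomialBasis π hπ) (List.reverse ∘ Subtype.val) f u) {x : List σ}
    (hux : (u : List σ) ++ x ∈ nonzeroWords π) :
    IsLeadingIndex (monomialBasis π hπ) (List.reverse ∘ Subtype.val) (f * π (wrd K x))
      ⟨_, hux⟩ := by
  rw [isLeadingIndex_iff (List.reverse_injective.comp Subtype.val_injective)] at hf ⊢
  obtain ⟨c, hc, hlow⟩ := hf
  refine ⟨c, hc, ?_⟩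
  have hfactor : f * π (wrd K x) - c • monomialBasis π hπ ⟨_, hux⟩ =
      (f - c • monomialBasis π hπ u) * π (wrd K x) := by
    rw [sub_mul, smul_mul_assoc, monomialBasis_mul, monomialBasis_apply]
  rw [hfactor]
  refine (map_span_le (LinearMap.mulRight K (π (wrd K x))) _ _).mpr ?_ ⟨_, hlow, rfl⟩
  rintro _ ⟨w, hw, rfl⟩
  rw [LinearMap.mulRight_apply, monomialBasis_mul]
  by_cases hwx : π (wrd K (w ++ x)) = 0
  · simp only [hwx, zero_mem]
  · exact subset_span ⟨⟨_, hwx⟩, List.reverse_append_lt_reverse_append hw x,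
      monomialBasis_apply π hπ _⟩

theorem leadingSpan_mul_span_le (L : Submodule K A) (T : Set (nonzeroWords π)) :
    leadingSpan (monomialBasis π hπ) (List.reverse ∘ Subtype.val) L *
        span K (monomialBasis π hπ '' T) ≤
      leadingSpan (monomialBasis π hπ) (List.reverse ∘ Subtype.val)
        (L * span K (monomialBasis π hπ '' T)) := by
  rw [leadingSpan, span_mul_span, span_le]
  rintro _ ⟨_, ⟨u, ⟨f, hfL, hf⟩, rfl⟩, _, ⟨x, hx, rfl⟩, rfl⟩
  have hxT : π (wrd K x) ∈ span K (monomialBasis π hπ '' T) :=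
    monomialBasis_apply π hπ x ▸ subset_span (Set.mem_image_of_mem _ hx)
  dsimp only
  rw [monomialBasis_apply π hπ x, monomialBasis_mul]
  by_cases hux : π (wrd K (u ++ x)) = 0
  · simp only [SetLike.mem_coe, hux, zero_mem]
  · have hlead := isLeadingIndex_mul_monomial π hπ hf hux
    exact subset_span
      ⟨⟨_, hux⟩, ⟨_, mul_mem_mul hfL hxT, hlead⟩, monomialBasis_apply π hπ _⟩

theorem rInv_leadingSpan {L V : Submodule K A} {T : Set (nonzeroWords π)} {ε : ℝ}
    (hVT : V ≤ span K (monomialBasis π hπ '' T))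
    (h : RInv K L (span K (monomialBasis π hπ '' T)) ε) :
    RInv K (leadingSpan (monomialBasis π hπ) (List.reverse ∘ Subtype.val) L) V ε := by
  have hkey : Function.Injective (List.reverse ∘ Subtype.val : nonzeroWords π → List σ) :=
    List.reverse_injective.comp Subtype.val_injective
  obtain ⟨hL, hLT, hlt⟩ := h
  have hle := (mul_le_mul_right hVT _).trans (leadingSpan_mul_span_le π hπ L T)
  have : FiniteDimensional K (leadingSpan (monomialBasis π hπ) (List.reverse ∘ Subtype.val)
      (L * span K (monomialBasis π hπ '' T))) :=
    FiniteDimensional.span_of_finite K ((leadingIndices_finite _).image _)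
  refine ⟨FiniteDimensional.span_of_finite K ((leadingIndices_finite L).image _),
    Submodule.finiteDimensional_of_le hle, ?_⟩
  calc (finrank K (leadingSpan _ _ L * V) : ℝ)
      ≤ finrank K (leadingSpan (monomialBasis π hπ) (List.reverse ∘ Subtype.val)
          (L * span K (monomialBasis π hπ '' T))) := by exact_mod_cast finrank_mono hle
    _ = finrank K (L * span K (monomialBasis π hπ '' T)) := by rw [finrank_leadingSpan hkey]
    _ < (1 + ε) * finrank K L := hlt
    _ = (1 + ε) * finrank K (leadingSpan _ _ L) := by rw [finrank_leadingSpan hkey]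

end LeadingWords

section Folner

variable {K A : Type} [Field K] [Ring A] [Algebra K A]

theorem RInv.finrank_pos {L V : Submodule K A} {ε : ℝ} (h : RInv K L V ε) :
    0 < finrank K L :=
  Nat.pos_of_ne_zero fun h0 => by simpa [h0] using (Nat.cast_nonneg _).trans_lt h.2.2

theorem tendsto_finrank_mul_div_finrank {V : Submodule K A} (hV : (1 : A) ∈ V)
    {L : ℕ → Submodule K A} (hL : ∀ n : ℕ, RInv K (L n) V (1 / ((n : ℝ) + 1))) :
    Tendsto (fun n => (finrank K (L n * V) : ℝ) / finrank K (L n)) atTop (nhds 1) := by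
  have hpos n : (0 : ℝ) < finrank K (L n) := by exact_mod_cast (hL n).finrank_pos
  refine tendsto_of_tendsto_of_tendsto_of_le_of_le tendsto_const_nhds
    (h := fun n : ℕ => 1 + 1 / ((n : ℝ) + 1)) ?_ (fun n => ?_) (fun n => ?_)
  · simpa using tendsto_one_div_add_atTop_nhds_zero_nat.const_add (1 : ℝ)
  · have : FiniteDimensional K (L n * V) := (hL n).2.1
    have hLV : L n ≤ L n * V := fun x hx => by simpa using mul_mem_mul hx hV
    rw [le_div_iff₀ (hpos n), one_mul]
    exact_mod_cast finrank_mono hLV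
  · rw [div_le_iff₀ (hpos n)]
    exact (hL n).2.2.le

theorem exists_folnerSeq {V : Submodule K A} (hV : (1 : A) ∈ V) (P : Submodule K A → Prop)
    (a : ℕ → A) (ha : span K (Set.range a) = ⊤)
    (h : ∀ n : ℕ, ∀ U : Submodule K A, FiniteDimensional K U →
      ∃ L, U ≤ L ∧ P L ∧ RInv K L V (1 / ((n : ℝ) + 1))) :
    ∃ L : ℕ → Submodule K A, (∀ n, P (L n)) ∧ FolnerSeq K V L := by
  choose! F hUF hPF hF using h
  obtain ⟨L, hL0, hLsucc⟩ : ∃ L : ℕ → Submodule K A, L 0 = F 0 (K ∙ a 0) ∧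
      ∀ n, L (n + 1) = F (n + 1) (L n ⊔ K ∙ a (n + 1)) :=
    ⟨fun n => Nat.rec (F 0 (K ∙ a 0)) (fun n Ln => F (n + 1) (Ln ⊔ K ∙ a (n + 1))) n,
      rfl, fun _ => rfl⟩
  have hL : ∀ n, RInv K (L n) V (1 / ((n : ℝ) + 1)) ∧ K ∙ a n ≤ L n ∧ P (L n) := by
    intro n
    induction n with
    | zero =>
      rw [hL0]
      exact ⟨hF 0 _ inferInstance, hUF 0 _ inferInstance, hPF 0 _ inferInstance⟩
    | succ n ih =>
      have : FiniteDimensional K (L n) := ih.1.1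
      have hU : FiniteDimensional K (L n ⊔ K ∙ a (n + 1) : Submodule K A) := inferInstance
      rw [hLsucc]
      exact ⟨by exact_mod_cast hF (n + 1) _ hU, le_sup_right.trans (hUF _ _ hU), hPF _ _ hU⟩
  have hmono : ∀ n, L n ≤ L (n + 1) := fun n => by
    have : FiniteDimensional K (L n) := (hL n).1.1
    exact hLsucc n ▸ le_sup_left.trans (hUF _ _ inferInstance)
  refine ⟨L, fun n => (hL n).2.2, monotone_nat_of_le_succ hmono, fun n => (hL n).1.1, ?_, ?_⟩
  · rw [eq_top_iff, ← ha, span_le]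
    rintro _ ⟨n, rfl⟩
    exact le_iSup L n ((hL n).2.1 (mem_span_singleton_self _))
  · exact tendsto_finrank_mul_div_finrank hV fun n => (hL n).1

end Folner

theorem stmt2_general (K : Type) [Field K] (d : ℕ)
    (A : Type) [Ring A] [Algebra K A] (π : FreeAlg K (Fin d) →ₐ[K] A)
    (hπ : MonomialPresentation K π) :
    (RightSelfAmenable K A →
      ∀ V : Submodule K A, FiniteDimensional K V → ∀ ε : ℝ, 0 < ε →
        ∃ L : Submodule K A, MonomialSubspace K π L ∧ RInv K L V ε) ∧
    (RightSelfExhAmenable K A →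
      ∃ L : ℕ → Submodule K A, (∀ n, MonomialSubspace K π (L n)) ∧
        FolnerSeq K (genV K π) L) := by
  set B := monomialBasis π hπ
  refine ⟨fun hAm V hV ε hε => ?_, fun hExh => ?_⟩
  · obtain ⟨T, hT, hVT⟩ := exists_finite_le_span_image (b := B) V
    obtain ⟨L, hL⟩ := hAm _ (FiniteDimensional.span_of_finite K (hT.image B)) ε hε
    exact ⟨_, monomialSubspace_span_image π hπ _, rInv_leadingSpan π hπ hVT hL⟩
  · have : FiniteDimensional K (genV K π) :=
      FiniteDimensional.span_of_finite K ((Set.finite_singleton 1).union (Set.finite_range _))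
    obtain ⟨T, hT, hVT⟩ := exists_finite_le_span_image (b := B) (genV K π)
    obtain ⟨e, he⟩ := exists_surjective_nat (List (Fin d))
    refine exists_folnerSeq (V := genV K π) (subset_span (Or.inl rfl)) _
      (fun n => π (wrd K (e n))) ?_ fun n U hU => ?_
    · rw [← span_monomials_eq_top π hπ.1, ← he.range_comp]
      rfl
    · obtain ⟨T', hT', hUT'⟩ := exists_finite_le_span_image (b := B) U
      obtain ⟨L, hT'L, hL⟩ := hExh _ (FiniteDimensional.span_of_finite K (hT.image B))
        (1 / ((n : ℝ) + 1)) (by positivity) _ (FiniteDimensional.span_of_finite K (hT'.image B))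
      exact ⟨_, hUT'.trans (span_image_le_leadingSpan hT'L), monomialSubspace_span_image π hπ _,
        rInv_leadingSpan π hπ hVT hL⟩

/-- monomial invariant subspaces and monomial Følner sequences.
Let `A` be a monomial algebra over a field `K`. If `A` is amenable as a right module over
itself, then for every finite-dimensional subspace `V ≤ A` and every `ε > 0` there is a
`(V, ε)`-invariant finite-dimensional subspace of `A` spanned by monomials. Furthermore,
if `A` is exhaustively amenable as a right module over itself, then `A` has a Følner
sequence consisting of subspaces spanned by monomials. -/
theorem stmt2 (K : Type) [Field K] (d : ℕ) (hd : 1 ≤ d)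
    (A : Type) [Ring A] [Algebra K A] (π : FreeAlg K (Fin d) →ₐ[K] A)
    (hπ : MonomialPresentation K π) :
    (RightSelfAmenable K A →
      ∀ V : Submodule K A, FiniteDimensional K V → ∀ ε : ℝ, 0 < ε →
        ∃ L : Submodule K A, MonomialSubspace K π L ∧ RInv K L V ε) ∧
    (RightSelfExhAmenable K A →
      ∃ L : ℕ → Submodule K A, (∀ n, MonomialSubspace K π (L n)) ∧
        FolnerSeq K (genV K π) L) :=
  stmt2_general K d A π hπ

end Paper
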